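/- arXiv:1004.5193 — 3 statements merged into one kernel-verified Lean document; each statement's English description precedes it below -/
import Mathlib

section
/- For all parameters a > 0, b > 0, λ ∈ (0,2) and every time t > 0, the kernel K(t,·) defined by K(t,x) = ∫_ℝ e^{2πixξ} e^{−t·ψ(ξ)} dξ belongs to L¹(ℝ). -/
/-!
With `α = 4π²at` and `β = tb`, the kernel `K(t,·)` is the inverse Fourier transform of
`g(ξ) = exp (β|ξ|^λ - αξ²)`, which is dominated by a Gaussian. Translating `g` by `±δ` multiplies
`𝓕⁻ g (x)` by `𝐞 (∓xδ)`, so the second difference `Δ²_δ g (ξ) = g(ξ+δ) - 2g(ξ) + g(ξ-δ)` has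
inverse Fourier transform `(2 cos (2πxδ) - 2) 𝓕⁻ g (x)`. At `δ = 1/(4|x|)` the factor is `-2`,
hence `|K(t,x)| ≤ ½ ‖Δ²_δ g‖₁`. Near `ξ = 0` the function `g` is Hölder of order `λ/2`, and for
`ξ > 0` one has `|g''(ξ)| ≲ ξ^(λ/2-2)`; splitting the integral at `|ξ| = 2δ` gives
`‖Δ²_δ g‖₁ = O(δ^(1+λ/2))`, so `K(t,x) = O(|x|^(-1-λ/2))` is integrable.
-/

open MeasureTheory Real

noncomputable section

/-- The Fourier symbol `ψ(ξ) = 4π²aξ² − b|ξ|^λ`. -/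
def psi (a b lam ξ : ℝ) : ℝ := 4 * π ^ 2 * a * ξ ^ 2 - b * |ξ| ^ lam

/-- The kernel `K(t,x) = ∫_ℝ e^{2πixξ} e^{−tψ(ξ)} dξ`. -/
def K (a b lam t x : ℝ) : ℂ :=
  ∫ ξ : ℝ, Complex.exp (2 * ↑π * Complex.I * ↑x * ↑ξ) * Complex.exp (-↑(t * psi a b lam ξ))

open FourierTransform Filter Set Asymptotics

def secondDiff {G : Type*} [AddGroup G] (f : ℝ → G) (δ ξ : ℝ) : G :=
  (f (ξ + δ) - f ξ) - (f ξ - f (ξ - δ))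

theorem secondDiff_neg_of_even {G : Type*} [AddCommGroup G] {f : ℝ → G}
    (hf : ∀ ξ, f (-ξ) = f ξ) (δ ξ : ℝ) : secondDiff f δ (-ξ) = secondDiff f δ ξ := by
  have hplus : f (-ξ + δ) = f (ξ - δ) := by rw [← hf, neg_add, neg_neg, sub_eq_add_neg]
  have hminus : f (-ξ - δ) = f (ξ + δ) := by rw [← hf, neg_sub, sub_neg_eq_add, add_comm]
  rw [secondDiff, secondDiff, hplus, hminus, hf]
  abel

theorem MeasureTheory.Integrable.secondDiff {G : Type*} [NormedAddCommGroup G] {f : ℝ → G}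
    (hf : Integrable f) (δ : ℝ) : Integrable (secondDiff f δ) :=
  ((hf.comp_add_right δ).sub hf).sub (hf.sub (hf.comp_sub_right δ))

theorem abs_secondDiff_le_of_hasDerivAt {f f' f'' : ℝ → ℝ} {ξ δ M : ℝ} (hδ : 0 ≤ δ)
    (hf : ∀ y ∈ Icc (ξ - δ) (ξ + δ), HasDerivAt f (f' y) y)
    (hf' : ∀ y ∈ Icc (ξ - δ) (ξ + δ), HasDerivAt f' (f'' y) y)
    (hM : ∀ y ∈ Icc (ξ - δ) (ξ + δ), |f'' y| ≤ M) :
    |secondDiff f δ ξ| ≤ M * δ ^ 2 := by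
  have hstep : ∀ s ∈ Icc (ξ - δ) ξ, |f' (s + δ) - f' s| ≤ M * δ := fun s hs ↦ by
    have := norm_image_sub_le_of_norm_deriv_le_segment' (f := f') (a := s) (b := s + δ)
      (fun y hy ↦ (hf' y ⟨by linarith [hs.1, hy.1], by linarith [hs.2, hy.2]⟩).hasDerivWithinAt)
      (fun y hy ↦ hM y ⟨by linarith [hs.1, hy.1], by linarith [hs.2, hy.2]⟩) (s + δ)
      ⟨by linarith, le_rfl⟩
    simpa using this
  have := norm_image_sub_le_of_norm_deriv_le_segment' (f := fun s ↦ f (s + δ) - f s)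
    (a := ξ - δ) (b := ξ)
    (fun y hy ↦ (((hf (y + δ) ⟨by linarith [hy.1], by linarith [hy.2]⟩).comp_add_const y δ).sub
      (hf y ⟨hy.1, by linarith [hy.2]⟩)).hasDerivWithinAt)
    (fun y hy ↦ hstep y (Ico_subset_Icc_self hy)) ξ ⟨by linarith, le_rfl⟩
  simp only [Real.norm_eq_abs, sub_add_cancel] at this
  rw [secondDiff]
  calc _ ≤ M * δ * (ξ - (ξ - δ)) := this
    _ = M * δ ^ 2 := by ring

section FourierInv

variable {E : Type*} [NormedAddCommGroup E] [NormedSpace ℂ E]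

theorem fourierInv_real_eq (f : ℝ → E) (x : ℝ) : 𝓕⁻ f x = ∫ ξ, 𝐞 (x * ξ) • f ξ := by
  simp [fourierInv_eq]

theorem fourierInv_comp_add_right (f : ℝ → E) (δ x : ℝ) :
    𝓕⁻ (fun ξ ↦ f (ξ + δ)) x = 𝐞 (-(x * δ)) • 𝓕⁻ f x :=
  congrFun (VectorFourier.fourierIntegral_comp_add_right 𝐞 volume (-innerₗ ℝ) f δ) x

theorem norm_fourierInv_le_integral_norm (f : ℝ → E) (x : ℝ) : ‖𝓕⁻ f x‖ ≤ ∫ ξ, ‖f ξ‖ :=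
  VectorFourier.norm_fourierIntegral_le_integral_norm 𝐞 volume (-innerₗ ℝ) f x

theorem MeasureTheory.Integrable.continuous_fourierInv {f : ℝ → E} (hf : Integrable f) :
    Continuous (𝓕⁻ f) := by
  rw [← Lp.fourierTransformInv_toLp (memLp_one_iff_integrable.2 hf)]
  exact BoundedContinuousFunction.continuous _

theorem integrable_fourierChar_smul {f : ℝ → E} (hf : Integrable f) (x : ℝ) :
    Integrable (fun ξ ↦ 𝐞 (x * ξ) • f ξ) := by
  simpa using (Real.fourierIntegral_convergent_iff (-x)).2 hf

theorem fourierInv_secondDiff {f : ℝ → E} (hf : Integrable f) (δ x : ℝ) :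
    𝓕⁻ (secondDiff f δ) x = ((𝐞 (-(x * δ)) : ℂ) + 𝐞 (x * δ) - 2) • 𝓕⁻ f x := by
  have hplus := fourierInv_comp_add_right f δ x
  have hminus := fourierInv_comp_add_right f (-δ) x
  simp only [fourierInv_real_eq, ← sub_eq_add_neg, mul_neg, neg_neg] at hplus hminus ⊢
  have i0 := integrable_fourierChar_smul hf x
  have iplus := integrable_fourierChar_smul (hf.comp_add_right δ) x
  have iminus := integrable_fourierChar_smul (hf.comp_sub_right δ) x
  simp only [secondDiff, smul_sub]
  rw [integral_sub (by exact iplus.sub i0) (by exact i0.sub iminus), integral_sub iplus i0,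
    integral_sub i0 iminus, hplus, hminus]
  simp only [Circle.smul_def, add_smul, sub_smul, two_smul]
  abel

theorem fourierChar_neg_add_fourierChar_of_abs_eq {y : ℝ} (hy : |y| = 1 / 4) :
    (𝐞 (-y) : ℂ) + 𝐞 y = 0 := by
  have hcos : Real.cos (2 * π * y) = 0 := by
    rw [← Real.cos_abs, abs_mul, hy, abs_of_pos (by positivity)]
    convert Real.cos_pi_div_two using 2
    ring
  simp only [Real.fourierChar_apply, Complex.exp_mul_I]
  push_cast
  rw [mul_neg, Complex.cos_neg, Complex.sin_neg]
  have hcos' : Complex.cos (2 * π * y) = 0 := by exact_mod_cast hcos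
  linear_combination 2 * hcos'

theorem two_mul_norm_fourierInv_le {f : ℝ → E} (hf : Integrable f) {x δ : ℝ}
    (hxδ : |x * δ| = 1 / 4) : 2 * ‖𝓕⁻ f x‖ ≤ ∫ ξ, ‖secondDiff f δ ξ‖ := by
  have h := norm_fourierInv_le_integral_norm (secondDiff f δ) x
  rwa [fourierInv_secondDiff hf, fourierChar_neg_add_fourierChar_of_abs_eq hxδ, norm_smul,
    zero_sub, norm_neg, Complex.norm_two] at h

theorem integrable_fourierInv_of_integral_norm_secondDiff_le {f : ℝ → E} (hf : Integrable f)
    {C ε : ℝ} (hε : 0 < ε)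
    (hmod : ∀ δ ∈ Ioc (0 : ℝ) 1, ∫ ξ, ‖secondDiff f δ ξ‖ ≤ C * δ ^ (1 + ε)) :
    Integrable (𝓕⁻ f) := by
  have hdecay : 𝓕⁻ f =O[cocompact ℝ] fun x ↦ (1 + ‖x‖) ^ (-(1 + ε)) := by
    refine IsBigO.of_bound (C / 2) ?_
    filter_upwards [tendsto_norm_cocompact_atTop.eventually_ge_atTop 1] with x hx
    rw [Real.norm_eq_abs] at hx
    set δ := 1 / (4 * |x|) with hδdef
    have hδ : δ ∈ Ioc (0 : ℝ) 1 :=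
      ⟨by positivity, by rw [div_le_one (by positivity)]; linarith⟩
    have hxδ : |x * δ| = 1 / 4 := by
      rw [abs_mul, abs_of_pos hδ.1, hδdef]
      field_simp
    have hpow : δ ^ (1 + ε) ≤ (1 + ‖x‖) ^ (-(1 + ε)) := by
      rw [hδdef, one_div, Real.inv_rpow (by positivity), ← Real.rpow_neg (by positivity)]
      exact Real.rpow_le_rpow_of_nonpos (by positivity) (by rw [Real.norm_eq_abs]; linarith)
        (by linarith)
    have hbound := (two_mul_norm_fourierInv_le hf hxδ).trans (hmod δ hδ)
    have hC : 0 ≤ C := (mul_nonneg_iff_of_pos_right (Real.rpow_pos_of_pos hδ.1 (1 + ε))).1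
      (by linarith [norm_nonneg (𝓕⁻ f x)])
    rw [Real.norm_of_nonneg (by positivity)]
    nlinarith [mul_le_mul_of_nonneg_left hpow hC]
  exact hf.continuous_fourierInv.locallyIntegrable.integrable_of_isBigO_cocompact hdecay
    ((integrable_one_add_norm (by simp; linarith)).integrableAtFilter _)

end FourierInv

theorem abs_rpow_sub_rpow_le {a b p : ℝ} (ha : 0 ≤ a) (hb : 0 ≤ b) (hp : 0 ≤ p) (hp1 : p ≤ 1) :
    |a ^ p - b ^ p| ≤ |a - b| ^ p := by
  wlog hba : b ≤ a generalizing a b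
  · rw [abs_sub_comm, abs_sub_comm a]
    exact this hb ha (by linarith)
  have hsub := Real.rpow_add_le_add_rpow hb (sub_nonneg.2 hba) hp hp1
  rw [add_sub_cancel] at hsub
  rw [abs_of_nonneg (sub_nonneg.2 (Real.rpow_le_rpow hb hba hp)), abs_of_nonneg (sub_nonneg.2 hba)]
  linarith

-- Writing `|s| ^ μ` as a square gives Hölder order `μ / 2` also when `μ > 1`.
theorem abs_abs_rpow_sub_abs_rpow_le {μ : ℝ} (hμ : 0 ≤ μ) (hμ2 : μ ≤ 2) (s r : ℝ) :
    |(|s| ^ μ - |r| ^ μ)| ≤ (|s| ^ (μ / 2) + |r| ^ (μ / 2)) * |s - r| ^ (μ / 2) := by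
  have hsq : ∀ s : ℝ, |s| ^ μ = (|s| ^ (μ / 2)) ^ 2 := fun s ↦ by
    rw [← rpow_natCast, ← rpow_mul (abs_nonneg s)]; norm_num
  rw [hsq, hsq, sq_sub_sq, abs_mul, abs_of_nonneg (by positivity)]
  refine mul_le_mul_of_nonneg_left ?_ (by positivity)
  refine (abs_rpow_sub_rpow_le (abs_nonneg s) (abs_nonneg r) (by positivity)
    (by linarith)).trans ?_
  exact rpow_le_rpow (abs_nonneg _) (abs_abs_sub_abs_le_abs_sub s r) (by positivity)

theorem abs_exp_sub_exp_le {u v M : ℝ} (hu : u ≤ M) (hv : v ≤ M) :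
    |exp u - exp v| ≤ exp M * |u - v| := by
  wlog hvu : v ≤ u generalizing u v
  · rw [abs_sub_comm, abs_sub_comm u]
    exact this hv hu (by linarith)
  have hexp : exp u - exp v ≤ exp u * (u - v) := by
    have := add_one_le_exp (v - u)
    rw [exp_sub] at this
    have hu' := exp_pos u
    field_simp at this
    nlinarith
  rw [abs_of_nonneg (sub_nonneg.2 (exp_le_exp.2 hvu)), abs_of_nonneg (sub_nonneg.2 hvu)]
  exact hexp.trans (mul_le_mul_of_nonneg_right (exp_le_exp.2 hu) (sub_nonneg.2 hvu))

theorem rpow_le_one_add_pow {c k : ℝ} {n : ℕ} (hc : 0 ≤ c) (hk : 0 ≤ k) (hkn : k ≤ n) :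
    c ^ k ≤ 1 + c ^ n := by
  rcases le_total c 1 with h | h
  · linarith [rpow_le_one hc h hk, pow_nonneg hc n]
  · rw [← rpow_natCast]
    linarith [rpow_le_rpow_of_exponent_le h hkn]

theorem pow_four_mul_exp_neg_le {α : ℝ} (hα : 0 < α) (c : ℝ) :
    c ^ 4 * exp (-(α / 2) * c ^ 2) ≤ 8 / α ^ 2 := by
  have h := quadratic_le_exp_of_nonneg (by positivity : 0 ≤ α / 2 * c ^ 2)
  rw [neg_mul, exp_neg, ← div_eq_mul_inv, div_le_div_iff₀ (exp_pos _) (by positivity)]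
  nlinarith [sq_nonneg c, pow_nonneg (sq_nonneg c) 2]

theorem exists_rpow_le_mul_sq_add {μ ε : ℝ} (hμ : 0 ≤ μ) (hμ2 : μ < 2) (hε : 0 < ε) :
    ∃ C, ∀ r, 0 ≤ r → r ^ μ ≤ ε * r ^ 2 + C := by
  obtain ⟨R, hR⟩ := ((tendsto_rpow_neg_atTop (by linarith : 0 < 2 - μ)).eventually
    (ge_mem_nhds hε)).and (eventually_gt_atTop 0) |>.exists_forall_of_atTop
  refine ⟨R ^ μ, fun r hr ↦ ?_⟩
  rcases le_total r R with h | h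
  · nlinarith [rpow_le_rpow hr h hμ, sq_nonneg r]
  · have hr0 : 0 < r := (hR R le_rfl).2.trans_le h
    have hsplit : r ^ μ = r ^ (-(2 - μ)) * r ^ 2 := by
      rw [← rpow_natCast, ← rpow_add hr0]; norm_num
    rw [hsplit]
    nlinarith [(hR r h).1, rpow_nonneg (hR R le_rfl).2.le μ, sq_nonneg r]

theorem integral_eq_two_mul_setIntegral_Ioi_of_even {g : ℝ → ℝ} (hg : ∀ x, g (-x) = g x) :
    ∫ x, g x = 2 * ∫ x in Ioi 0, g x := by
  rw [← integral_comp_abs]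
  congr 1 with x
  rcases abs_choice x with h | h <;> simp only [h, hg]

theorem setIntegral_Ioc_le_of_le {g : ℝ → ℝ} {a b C : ℝ} (hab : a ≤ b)
    (hg : IntegrableOn g (Ioc a b)) (h : ∀ x ∈ Ioc a b, g x ≤ C) :
    ∫ x in Ioc a b, g x ≤ C * (b - a) :=
  calc ∫ x in Ioc a b, g x ≤ ∫ _ in Ioc a b, C :=
        setIntegral_mono_on hg (integrableOn_const measure_Ioc_lt_top.ne) measurableSet_Ioc h
    _ = C * (b - a) := by
        rw [setIntegral_const, measureReal_def, volume_Ioc, ENNReal.toReal_ofReal (by linarith),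
          smul_eq_mul, mul_comm]

theorem setIntegral_Ioi_le_of_le_rpow {g : ℝ → ℝ} {a C q : ℝ} (ha : 0 < a) (hq : q < -1)
    (hg : IntegrableOn g (Ioi a)) (h : ∀ x ∈ Ioi a, g x ≤ C * x ^ q) :
    ∫ x in Ioi a, g x ≤ C * (a ^ (q + 1) / (-1 - q)) :=
  calc ∫ x in Ioi a, g x ≤ ∫ x in Ioi a, C * x ^ q :=
        setIntegral_mono_on hg ((integrableOn_Ioi_rpow_of_lt hq ha).const_mul C)
          measurableSet_Ioi h
    _ = C * (a ^ (q + 1) / (-1 - q)) := by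
        rw [integral_const_mul, integral_Ioi_rpow_of_lt hq ha, neg_div, ← div_neg]
        ring

section PerturbedGaussian

variable {α β μ : ℝ}

def perturbedGaussian (α β μ ξ : ℝ) : ℝ := exp (β * |ξ| ^ μ - α * ξ ^ 2)

def perturbedGaussianDeriv (α β μ c : ℝ) : ℝ :=
  (β * μ * c ^ (μ - 1) - 2 * α * c) * perturbedGaussian α β μ c

def perturbedGaussianDeriv2 (α β μ c : ℝ) : ℝ :=
  (β * μ * (μ - 1) * c ^ (μ - 2) - 2 * α + (β * μ * c ^ (μ - 1) - 2 * α * c) ^ 2) *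
    perturbedGaussian α β μ c

theorem perturbedGaussian_pos (ξ : ℝ) : 0 < perturbedGaussian α β μ ξ := exp_pos _

theorem perturbedGaussian_neg (ξ : ℝ) :
    perturbedGaussian α β μ (-ξ) = perturbedGaussian α β μ ξ := by
  simp [perturbedGaussian]

theorem continuous_perturbedGaussian (hμ : 0 ≤ μ) : Continuous (perturbedGaussian α β μ) :=
  continuous_exp.comp <| (continuous_const.mul (continuous_abs.rpow_const fun _ ↦ Or.inr hμ)).sub
    (continuous_const.mul (continuous_pow 2))

theorem exists_perturbedGaussian_le (hα : 0 < α) (hβ : 0 < β) (hμ : 0 ≤ μ) (hμ2 : μ < 2) :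
    ∃ C, ∀ ξ, perturbedGaussian α β μ ξ ≤ C * exp (-(α / 2) * ξ ^ 2) := by
  obtain ⟨C, hC⟩ := exists_rpow_le_mul_sq_add hμ hμ2 (by positivity : 0 < α / (2 * β))
  refine ⟨exp (β * C), fun ξ ↦ ?_⟩
  have hβξ := mul_le_mul_of_nonneg_left (hC |ξ| (abs_nonneg ξ)) hβ.le
  have hβα : β * (α / (2 * β) * ξ ^ 2) = α / 2 * ξ ^ 2 := by field_simp
  rw [perturbedGaussian, ← exp_add, exp_le_exp]
  rw [sq_abs, mul_add, hβα] at hβξ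
  linarith

theorem integrable_perturbedGaussian (hα : 0 < α) (hβ : 0 < β) (hμ : 0 ≤ μ) (hμ2 : μ < 2) :
    Integrable (perturbedGaussian α β μ) := by
  obtain ⟨C, hC⟩ := exists_perturbedGaussian_le hα hβ hμ hμ2
  refine ((integrable_exp_neg_mul_sq (by positivity : 0 < α / 2)).const_mul C).mono'
    (continuous_perturbedGaussian hμ).aestronglyMeasurable (.of_forall fun ξ ↦ ?_)
  rw [Real.norm_of_nonneg (perturbedGaussian_pos ξ).le]
  exact hC ξ

theorem hasDerivAt_perturbedGaussian {c : ℝ} (hc : 0 < c) :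
    HasDerivAt (perturbedGaussian α β μ) (perturbedGaussianDeriv α β μ c) c := by
  have hexp := (((hasDerivAt_rpow_const (p := μ) (Or.inl hc.ne')).const_mul β).sub
    ((hasDerivAt_pow 2 c).const_mul α)).exp
  have heq : perturbedGaussian α β μ =ᶠ[nhds c] fun y ↦ exp (β * y ^ μ - α * y ^ 2) := by
    filter_upwards [Ioi_mem_nhds hc] with y hy
    rw [perturbedGaussian, abs_of_pos hy]
  refine (hexp.congr_of_eventuallyEq heq).congr_deriv ?_
  simp only [perturbedGaussianDeriv, perturbedGaussian, abs_of_pos hc, Pi.sub_apply]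
  push_cast
  ring

theorem hasDerivAt_perturbedGaussianDeriv {c : ℝ} (hc : 0 < c) :
    HasDerivAt (perturbedGaussianDeriv α β μ) (perturbedGaussianDeriv2 α β μ c) c := by
  have hfactor := ((hasDerivAt_rpow_const (p := μ - 1) (Or.inl hc.ne')).const_mul (β * μ)).sub
    ((hasDerivAt_id c).const_mul (2 * α))
  refine (hfactor.mul (hasDerivAt_perturbedGaussian hc)).congr_deriv ?_
  rw [perturbedGaussianDeriv2, perturbedGaussianDeriv, show μ - 1 - 1 = μ - 2 by ring]
  simp only [id, Pi.sub_apply]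
  ring

theorem abs_perturbedGaussianDeriv2_le (hα : 0 < α) (hβ : 0 < β) (hμ : 0 < μ) (hμ2 : μ < 2)
    {c : ℝ} (hc : 0 < c) :
    |perturbedGaussianDeriv2 α β μ c| ≤
      (2 * α + 2 * β + 8 * α ^ 2 + 8 * β ^ 2) * c ^ (μ / 2 - 2) * (1 + c ^ 4) *
        perturbedGaussian α β μ c := by
  have hbound : ∀ k, 0 ≤ k → k ≤ 4 → c ^ (μ / 2 - 2 + k) ≤ c ^ (μ / 2 - 2) * (1 + c ^ 4) :=
    fun k hk hk4 ↦ by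
      rw [rpow_add hc]
      exact mul_le_mul_of_nonneg_left (rpow_le_one_add_pow hc.le hk (by exact_mod_cast hk4))
        (rpow_nonneg hc.le _)
  have h1 := hbound (μ / 2) (by positivity) (by linarith)
  have h2 := hbound (3 * μ / 2) (by positivity) (by linarith)
  have h3 := hbound (2 - μ / 2) (by linarith) (by linarith)
  have h4 := hbound (4 - μ / 2) (by linarith) (by linarith)
  rw [show μ / 2 - 2 + μ / 2 = μ - 2 by ring] at h1
  rw [show μ / 2 - 2 + 3 * μ / 2 = (μ - 1) + (μ - 1) by ring, rpow_add hc, ← sq] at h2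
  rw [show μ / 2 - 2 + (2 - μ / 2) = 0 by ring, rpow_zero] at h3
  rw [show μ / 2 - 2 + (4 - μ / 2) = (2 : ℕ) by norm_num, rpow_natCast] at h4
  have hμ1 : |μ * (μ - 1)| ≤ 2 := by
    rw [abs_le]; constructor <;> nlinarith
  have hfirst : |β * μ * (μ - 1) * c ^ (μ - 2)| ≤ 2 * β * c ^ (μ - 2) := by
    rw [show β * μ * (μ - 1) = β * (μ * (μ - 1)) by ring, abs_mul, abs_mul, abs_of_pos hβ,
      abs_of_pos (rpow_pos_of_pos hc _)]
    exact mul_le_mul_of_nonneg_right (by nlinarith) (rpow_pos_of_pos hc _).le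
  have hsq : (β * μ * c ^ (μ - 1) - 2 * α * c) ^ 2 ≤
      8 * β ^ 2 * (c ^ (μ - 1)) ^ 2 + 8 * α ^ 2 * c ^ 2 := by
    nlinarith [sq_nonneg (β * μ * c ^ (μ - 1) + 2 * α * c), sq_nonneg (c ^ (μ - 1)),
      mul_le_mul_of_nonneg_right (show μ ^ 2 ≤ 4 by nlinarith) (sq_nonneg (β * c ^ (μ - 1)))]
  rw [perturbedGaussianDeriv2, abs_mul, abs_of_pos (perturbedGaussian_pos c)]
  refine mul_le_mul_of_nonneg_right ?_ (perturbedGaussian_pos c).le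
  have hW : 0 ≤ c ^ (μ / 2 - 2) * (1 + c ^ 4) := by positivity
  calc _ ≤ |β * μ * (μ - 1) * c ^ (μ - 2)| + 2 * α + (β * μ * c ^ (μ - 1) - 2 * α * c) ^ 2 := by
        refine (abs_add_le _ _).trans ?_
        rw [abs_of_nonneg (sq_nonneg (β * μ * c ^ (μ - 1) - 2 * α * c))]
        linarith [abs_sub (β * μ * (μ - 1) * c ^ (μ - 2)) (2 * α),
          abs_of_pos (by positivity : 0 < 2 * α)]
    _ ≤ _ := by nlinarith

theorem exists_abs_perturbedGaussianDeriv2_le (hα : 0 < α) (hβ : 0 < β) (hμ : 0 < μ)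
    (hμ2 : μ < 2) :
    ∃ A, ∀ c, 0 < c → |perturbedGaussianDeriv2 α β μ c| ≤ A * c ^ (μ / 2 - 2) := by
  obtain ⟨C, hC⟩ := exists_perturbedGaussian_le hα hβ hμ.le hμ2
  have hC0 : 0 ≤ C := by
    have := (perturbedGaussian_pos 0).trans_le (hC 0)
    exact (pos_of_mul_pos_left this (exp_pos _).le).le
  set K := 2 * α + 2 * β + 8 * α ^ 2 + 8 * β ^ 2
  refine ⟨K * (C * (1 + 8 / α ^ 2)), fun c hc ↦ ?_⟩
  have hdecay : (1 + c ^ 4) * perturbedGaussian α β μ c ≤ C * (1 + 8 / α ^ 2) :=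
    calc (1 + c ^ 4) * perturbedGaussian α β μ c
        ≤ (1 + c ^ 4) * (C * exp (-(α / 2) * c ^ 2)) := by gcongr; exact hC c
      _ = C * (exp (-(α / 2) * c ^ 2) + c ^ 4 * exp (-(α / 2) * c ^ 2)) := by ring
      _ ≤ C * (1 + 8 / α ^ 2) := by
        gcongr
        · exact exp_le_one_iff.2 (by nlinarith [sq_nonneg c])
        · exact pow_four_mul_exp_neg_le hα c
  calc _ ≤ K * c ^ (μ / 2 - 2) * (1 + c ^ 4) * perturbedGaussian α β μ c :=
        abs_perturbedGaussianDeriv2_le hα hβ hμ hμ2 hc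
    _ = K * c ^ (μ / 2 - 2) * ((1 + c ^ 4) * perturbedGaussian α β μ c) := by ring
    _ ≤ K * c ^ (μ / 2 - 2) * (C * (1 + 8 / α ^ 2)) := by gcongr
    _ = _ := by ring

theorem exists_abs_secondDiff_perturbedGaussian_le_of_ge (hα : 0 < α) (hβ : 0 < β) (hμ : 0 < μ)
    (hμ2 : μ < 2) : ∃ B, ∀ δ, 0 < δ → ∀ ξ, 2 * δ ≤ ξ →
      |secondDiff (perturbedGaussian α β μ) δ ξ| ≤ B * δ ^ 2 * ξ ^ (μ / 2 - 2) := by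
  obtain ⟨A, hA⟩ := exists_abs_perturbedGaussianDeriv2_le hα hβ hμ hμ2
  have hA0 : 0 ≤ A := by simpa using (abs_nonneg _).trans (hA 1 one_pos)
  refine ⟨A * 2⁻¹ ^ (μ / 2 - 2), fun δ hδ ξ hξ ↦ ?_⟩
  have hpos : ∀ y ∈ Icc (ξ - δ) (ξ + δ), 0 < y := fun y hy ↦ by linarith [hy.1]
  have hM : ∀ y ∈ Icc (ξ - δ) (ξ + δ),
      |perturbedGaussianDeriv2 α β μ y| ≤ A * (2⁻¹ * ξ) ^ (μ / 2 - 2) := fun y hy ↦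
    (hA y (hpos y hy)).trans <| mul_le_mul_of_nonneg_left
      (rpow_le_rpow_of_nonpos (by linarith) (by linarith [hy.1]) (by linarith)) hA0
  calc _ ≤ A * (2⁻¹ * ξ) ^ (μ / 2 - 2) * δ ^ 2 :=
        abs_secondDiff_le_of_hasDerivAt hδ.le
          (fun y hy ↦ hasDerivAt_perturbedGaussian (hpos y hy))
          (fun y hy ↦ hasDerivAt_perturbedGaussianDeriv (hpos y hy)) hM
    _ = _ := by rw [mul_rpow (by norm_num) (by linarith)]; ring

theorem exists_abs_perturbedGaussian_sub_le (hα : 0 < α) (hβ : 0 < β) (hμ : 0 < μ)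
    (hμ2 : μ < 2) : ∃ L, ∀ s r, |s| ≤ 3 → |r| ≤ 3 → |s - r| ≤ 1 →
      |perturbedGaussian α β μ s - perturbedGaussian α β μ r| ≤ L * |s - r| ^ (μ / 2) := by
  have hp1 : μ / 2 ≤ 1 := by linarith
  have hle3 : ∀ s : ℝ, |s| ≤ 3 → |s| ^ (μ / 2) ≤ 3 := fun s hs ↦
    calc |s| ^ (μ / 2) ≤ 3 ^ (μ / 2) := rpow_le_rpow (abs_nonneg s) hs (by positivity)
      _ ≤ 3 ^ (1 : ℝ) := rpow_le_rpow_of_exponent_le (by norm_num) hp1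
      _ = 3 := rpow_one 3
  have hexponent : ∀ s : ℝ, |s| ≤ 3 → β * |s| ^ μ - α * s ^ 2 ≤ 9 * β := fun s hs ↦ by
    have : |s| ^ μ ≤ 9 :=
      calc |s| ^ μ ≤ 3 ^ μ := rpow_le_rpow (abs_nonneg s) hs hμ.le
        _ ≤ 3 ^ (2 : ℝ) := rpow_le_rpow_of_exponent_le (by norm_num) hμ2.le
        _ = 9 := by norm_num
    nlinarith [mul_le_mul_of_nonneg_left this hβ.le, sq_nonneg s]
  refine ⟨exp (9 * β) * (6 * (α + β)), fun s r hs hr hsr ↦ ?_⟩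
  have hrpow : |(|s| ^ μ - |r| ^ μ)| ≤ 6 * |s - r| ^ (μ / 2) :=
    (abs_abs_rpow_sub_abs_rpow_le hμ.le hμ2.le s r).trans <| mul_le_mul_of_nonneg_right
      (by linarith [hle3 s hs, hle3 r hr]) (rpow_nonneg (abs_nonneg _) _)
  have hsq : |s ^ 2 - r ^ 2| ≤ 6 * |s - r| ^ (μ / 2) := by
    rw [sq_sub_sq, abs_mul]
    exact mul_le_mul ((abs_add_le s r).trans (by linarith))
      (self_le_rpow_of_le_one (abs_nonneg _) hsr hp1) (abs_nonneg _) (by norm_num)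
  refine (abs_exp_sub_exp_le (hexponent s hs) (hexponent r hr)).trans ?_
  rw [mul_assoc]
  refine mul_le_mul_of_nonneg_left ?_ (exp_pos _).le
  have hdiff : β * |s| ^ μ - α * s ^ 2 - (β * |r| ^ μ - α * r ^ 2) =
      β * (|s| ^ μ - |r| ^ μ) - α * (s ^ 2 - r ^ 2) := by ring
  rw [hdiff]
  refine (abs_sub _ _).trans ?_
  rw [abs_mul, abs_mul, abs_of_pos hβ, abs_of_pos hα]
  nlinarith [mul_le_mul_of_nonneg_left hrpow hβ.le, mul_le_mul_of_nonneg_left hsq hα.le]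

theorem exists_abs_secondDiff_perturbedGaussian_le_of_le (hα : 0 < α) (hβ : 0 < β) (hμ : 0 < μ)
    (hμ2 : μ < 2) : ∃ L, ∀ δ ∈ Ioc (0 : ℝ) 1, ∀ ξ ∈ Ioc 0 (2 * δ),
      |secondDiff (perturbedGaussian α β μ) δ ξ| ≤ L * δ ^ (μ / 2) := by
  obtain ⟨L, hL⟩ := exists_abs_perturbedGaussian_sub_le hα hβ hμ hμ2
  refine ⟨2 * L, fun δ ⟨hδ0, hδ1⟩ ξ ⟨hξ0, hξ⟩ ↦ ?_⟩
  have hξ3 : |ξ| ≤ 3 := by rw [abs_le]; constructor <;> linarith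
  have hplus := hL (ξ + δ) ξ (by rw [abs_le]; constructor <;> linarith) hξ3
    (by rw [add_sub_cancel_left, abs_of_pos hδ0]; exact hδ1)
  have hminus := hL ξ (ξ - δ) hξ3 (by rw [abs_le]; constructor <;> linarith)
    (by rw [sub_sub_cancel, abs_of_pos hδ0]; exact hδ1)
  rw [add_sub_cancel_left, abs_of_pos hδ0] at hplus
  rw [sub_sub_cancel, abs_of_pos hδ0] at hminus
  rw [secondDiff]
  linarith [abs_sub (perturbedGaussian α β μ (ξ + δ) - perturbedGaussian α β μ ξ)
    (perturbedGaussian α β μ ξ - perturbedGaussian α β μ (ξ - δ))]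

theorem exists_integral_abs_secondDiff_perturbedGaussian_le (hα : 0 < α) (hβ : 0 < β)
    (hμ : 0 < μ) (hμ2 : μ < 2) : ∃ C, ∀ δ ∈ Ioc (0 : ℝ) 1,
      ∫ ξ, |secondDiff (perturbedGaussian α β μ) δ ξ| ≤ C * δ ^ (1 + μ / 2) := by
  obtain ⟨L, hL⟩ := exists_abs_secondDiff_perturbedGaussian_le_of_le hα hβ hμ hμ2
  obtain ⟨B, hB⟩ := exists_abs_secondDiff_perturbedGaussian_le_of_ge hα hβ hμ hμ2
  refine ⟨2 * (2 * L + B * 2 ^ (μ / 2 - 1) / (1 - μ / 2)), fun δ hδ ↦ ?_⟩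
  have hδ0 := hδ.1
  have hD := ((integrable_perturbedGaussian hα hβ hμ.le hμ2).secondDiff δ).abs
  have hnear := setIntegral_Ioc_le_of_le (by linarith) hD.integrableOn (hL δ hδ)
  have hfar := setIntegral_Ioi_le_of_le_rpow (by linarith) (by linarith) hD.integrableOn
    fun ξ hξ ↦ hB δ hδ0 ξ (le_of_lt hξ)
  rw [integral_eq_two_mul_setIntegral_Ioi_of_even fun ξ ↦ by
      rw [secondDiff_neg_of_even perturbedGaussian_neg],
    ← Ioc_union_Ioi_eq_Ioi (by linarith : 0 ≤ 2 * δ),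
    setIntegral_union (Ioc_disjoint_Ioi le_rfl) measurableSet_Ioi hD.integrableOn
      hD.integrableOn]
  refine (mul_le_mul_of_nonneg_left (add_le_add hnear hfar) zero_le_two).trans_eq ?_
  have hpow : δ ^ (1 + μ / 2) = δ * δ ^ (μ / 2) := by rw [rpow_add hδ0, rpow_one]
  have hpow' : δ ^ (1 + μ / 2) = δ ^ 2 * δ ^ (μ / 2 - 1) := by
    rw [← rpow_natCast, ← rpow_add hδ0]; congr 1; push_cast; ring
  rw [show μ / 2 - 2 + 1 = μ / 2 - 1 by ring, show -1 - (μ / 2 - 2) = 1 - μ / 2 by ring,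
    mul_rpow zero_le_two hδ0.le]
  calc _ = 2 * (2 * L) * (δ * δ ^ (μ / 2)) +
        2 * (B * 2 ^ (μ / 2 - 1) / (1 - μ / 2)) * (δ ^ 2 * δ ^ (μ / 2 - 1)) := by ring
    _ = _ := by rw [← hpow, ← hpow']; ring

end PerturbedGaussian

theorem K_eq_fourierInv (a b lam t : ℝ) :
    (fun x ↦ K a b lam t x) =
      𝓕⁻ fun ξ ↦ (perturbedGaussian (4 * π ^ 2 * a * t) (t * b) lam ξ : ℂ) := by
  ext x
  rw [K, fourierInv_real_eq]
  congr 1 with ξ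
  rw [Circle.smul_def, Real.fourierChar_apply, perturbedGaussian, Complex.ofReal_exp, smul_eq_mul,
    psi]
  congr 2
  · push_cast; ring
  · push_cast; ring

theorem kernel_mem_L1
    (a b lam : ℝ) (ha : 0 < a) (hb : 0 < b) (hlam : lam ∈ Set.Ioo (0 : ℝ) 2)
    (t : ℝ) (ht : 0 < t) :
    Integrable (fun x : ℝ => K a b lam t x) volume := by
  obtain ⟨hlam0, hlam2⟩ := hlam
  have hα : 0 < 4 * π ^ 2 * a * t := by positivity
  have hβ : 0 < t * b := by positivity
  obtain ⟨C, hC⟩ := exists_integral_abs_secondDiff_perturbedGaussian_le hα hβ hlam0 hlam2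
  rw [K_eq_fourierInv]
  refine integrable_fourierInv_of_integral_norm_secondDiff_le (C := C)
    (integrable_perturbedGaussian hα hβ hlam0.le hlam2).ofReal (by positivity : 0 < lam / 2)
    fun δ hδ ↦ ?_
  simpa only [secondDiff, ← Complex.ofReal_sub, Complex.norm_real, Real.norm_eq_abs]
    using hC δ hδ
end
end

section
/- For every λ ∈ (1,2), every Schwartz function φ : ℝ → ℝ and every x ∈ ℝ, the function z ↦ (φ(x+z) − φ(x) − φ'(x)·z)/|z|^{1+λ} is integrable on ℝ, and ∫_ℝ (φ(x+z) − φ(x) − φ'(x)·z)/|z|^{1+λ} dz = (1/(λ(λ−1))) ∫_ℝ φ''(x+z)/|z|^{λ−1} dz. -/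
/-!
Taylor's formula with integral remainder writes the numerator as
`z² ∫₀¹ (1 - t) φ''(x + t z) dt`, so the integrand is
`∫₀¹ (1 - t) φ''(x + t z) |z|^(1-λ) dt`. For fixed `t` the substitution `u = t z` turns the
`z`-integral into `t^(λ-2) ∫ φ''(x + u) |u|^(1-λ) du`, which converges since `1 - λ > -1` and
`φ''` is bounded and integrable. The same computation with `|φ''|` justifies Fubini, after which
only the Beta integral `∫₀¹ (1 - t) t^(λ-2) dt = 1 / (λ (λ - 1))` remains.
-/

open MeasureTheory Real Set

noncomputable section

section WeightedIntegrals

variable {h : ℝ → ℝ} {s : ℝ}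

theorem integrable_mul_abs_rpow_of_abs_le {M : ℝ} (hs₁ : -1 < s) (hs₀ : s ≤ 0)
    (hint : Integrable h) (hM : ∀ u, |h u| ≤ M) :
    Integrable fun u : ℝ => h u * |u| ^ s := by
  have hmeas : AEStronglyMeasurable (fun u : ℝ => h u * |u| ^ s) :=
    hint.aestronglyMeasurable.mul (measurable_abs.pow_const s).aestronglyMeasurable
  have h_ball : IntegrableOn (fun u : ℝ => h u * |u| ^ s) (Metric.ball 0 1) := by
    refine integrableOn_ball_of_norm_le_rpow (C := M) (α := -s) (by simp)
      (by rw [Module.finrank_self, Nat.cast_one]; linarith)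
      (ae_of_all _ fun u => ?_) hmeas
    rw [norm_mul, norm_eq_abs, norm_eq_abs, abs_of_nonneg (rpow_nonneg (abs_nonneg u) s), neg_neg]
    exact mul_le_mul_of_nonneg_right (hM u) (rpow_nonneg (abs_nonneg u) s)
  have h_compl : IntegrableOn (fun u : ℝ => h u * |u| ^ s) (Metric.ball 0 1)ᶜ := by
    refine hint.norm.integrableOn.mono' hmeas.restrict ?_
    filter_upwards [ae_restrict_mem measurableSet_ball.compl] with u hu
    have hu : 1 ≤ |u| := by simpa using hu
    rw [norm_mul, norm_eq_abs (|u| ^ s), abs_of_nonneg (rpow_nonneg (abs_nonneg u) s)]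
    exact mul_le_of_le_one_right (norm_nonneg _) (rpow_le_one_of_one_le_of_nonpos hu hs₀)
  rw [← integrableOn_univ, ← union_compl_self (Metric.ball (0 : ℝ) 1)]
  exact h_ball.union h_compl

theorem comp_mul_left_mul_abs_rpow_eq {t : ℝ} (ht : 0 < t) (z : ℝ) :
    h (t * z) * |z| ^ s = t ^ (-s) * (h (t * z) * |t * z| ^ s) := by
  rw [abs_mul, abs_of_pos ht, mul_rpow ht.le (abs_nonneg z), rpow_neg ht.le]
  field_simp

theorem MeasureTheory.Integrable.comp_mul_left_mul_abs_rpow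
    (hW : Integrable fun u : ℝ => h u * |u| ^ s) {t : ℝ} (ht : 0 < t) :
    Integrable fun z : ℝ => h (t * z) * |z| ^ s := by
  simpa only [comp_mul_left_mul_abs_rpow_eq ht] using
    (hW.comp_mul_left' ht.ne').const_mul (t ^ (-s))

theorem integral_comp_mul_left_mul_abs_rpow {t : ℝ} (ht : 0 < t) :
    ∫ z : ℝ, h (t * z) * |z| ^ s = t ^ (-s - 1) * ∫ u : ℝ, h u * |u| ^ s := by
  simp_rw [comp_mul_left_mul_abs_rpow_eq ht]
  rw [integral_const_mul, Measure.integral_comp_mul_left (fun u => h u * |u| ^ s) t,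
    smul_eq_mul, abs_inv, abs_of_pos ht, ← mul_assoc, sub_eq_add_neg, rpow_add ht, rpow_neg_one]

end WeightedIntegrals

theorem integral_one_sub_mul_rpow {r : ℝ} (hr : -1 < r) :
    ∫ t in (0 : ℝ)..1, (1 - t) * t ^ r = 1 / ((r + 1) * (r + 2)) := by
  have hsplit : ∀ t ∈ uIcc (0 : ℝ) 1, (1 - t) * t ^ r = t ^ r - t ^ (r + 1) := by
    intro t ht
    rw [uIcc_of_le zero_le_one] at ht
    rw [rpow_add_one' ht.1 (by linarith)]
    ring
  rw [intervalIntegral.integral_congr hsplit, intervalIntegral.integral_sub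
    (intervalIntegral.intervalIntegrable_rpow' hr)
    (intervalIntegral.intervalIntegrable_rpow' (by linarith)),
    integral_rpow (Or.inl hr), integral_rpow (Or.inl (by linarith)), one_rpow, one_rpow,
    zero_rpow (by linarith), zero_rpow (by linarith), show r + 1 + 1 = r + 2 by ring]
  have hr₁ : r + 1 ≠ 0 := by linarith
  have hr₂ : r + 2 ≠ 0 := by linarith
  field_simp
  ring

theorem sub_sub_deriv_mul_eq_integral {f : ℝ → ℝ} (hf : ContDiff ℝ 2 f) (x z : ℝ) :
    f (x + z) - f x - deriv f x * z =
      ∫ t in (0 : ℝ)..1, (1 - t) * (z ^ 2 * deriv (deriv f) (x + t * z)) := by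
  have := map_add_eq_sum_add_integral_iteratedFDeriv (n := 1) (x := x) (y := z)
    fun t _ => hf.contDiffAt
  simp only [iteratedFDeriv_apply_eq_iteratedDeriv_mul_prod, Finset.prod_const, Finset.card_univ,
    Fintype.card_fin, smul_eq_mul, Finset.sum_range_succ, Finset.range_one, Finset.sum_singleton,
    Nat.factorial_zero, Nat.factorial_one, Nat.cast_one, inv_one, pow_zero, pow_one, one_mul,
    iteratedDeriv_zero, iteratedDeriv_succ] at this
  rw [this]
  ring

def taylorKernel (h : ℝ → ℝ) (s z t : ℝ) : ℝ :=
  (1 - t) * (h (t * z) * |z| ^ s)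

section TaylorKernel

variable {h : ℝ → ℝ} {s : ℝ}

theorem integral_taylorKernel {t : ℝ} (ht : 0 < t) :
    ∫ z : ℝ, taylorKernel h s z t = (1 - t) * t ^ (-s - 1) * ∫ u : ℝ, h u * |u| ^ s := by
  simp only [taylorKernel]
  rw [integral_const_mul, integral_comp_mul_left_mul_abs_rpow ht, mul_assoc]

theorem integrable_uncurry_taylorKernel (hs : s < 0) (hh : Measurable h)
    (hW : Integrable fun u : ℝ => h u * |u| ^ s) :
    Integrable (Function.uncurry (taylorKernel h s))
      (volume.prod (volume.restrict (Ioc 0 1))) := by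
  have hmeas : AEStronglyMeasurable (Function.uncurry (taylorKernel h s))
      (volume.prod (volume.restrict (Ioc 0 1))) :=
    ((measurable_const.sub measurable_snd).mul ((hh.comp (measurable_snd.mul measurable_fst)).mul
      (measurable_fst.abs.pow_const s))).aestronglyMeasurable
  rw [integrable_prod_iff' hmeas]
  constructor
  · filter_upwards [ae_restrict_mem measurableSet_Ioc] with t ht
    exact (hW.comp_mul_left_mul_abs_rpow ht.1).const_mul (1 - t)
  · have h_norm : ∀ t ∈ Ioc (0 : ℝ) 1, ∫ z : ℝ, ‖taylorKernel h s z t‖ =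
        (1 - t) * t ^ (-s - 1) * ∫ u : ℝ, |h u| * |u| ^ s := by
      intro t ht
      have h_abs : ∀ z, ‖taylorKernel h s z t‖ = taylorKernel (fun u => |h u|) s z t := by
        intro z
        rw [taylorKernel, taylorKernel, norm_mul, norm_mul, norm_eq_abs, norm_eq_abs, norm_eq_abs,
          abs_of_nonneg (sub_nonneg.2 ht.2), abs_of_nonneg (rpow_nonneg (abs_nonneg z) s)]
      simp_rw [h_abs]
      exact integral_taylorKernel ht.1
    have h_rpow : IntervalIntegrable (fun t : ℝ => (1 - t) * t ^ (-s - 1)) volume 0 1 :=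
      (intervalIntegral.intervalIntegrable_rpow' (by linarith)).continuousOn_mul (by fun_prop)
    rw [intervalIntegrable_iff_integrableOn_Ioc_of_le zero_le_one] at h_rpow
    exact IntegrableOn.congr_fun (h_rpow.mul_const _) (fun t ht => (h_norm t ht).symm)
      measurableSet_Ioc

theorem integrable_integral_taylorKernel_and_eq (hs : s < 0) (hh : Measurable h)
    (hW : Integrable fun u : ℝ => h u * |u| ^ s) :
    Integrable (fun z : ℝ => ∫ t in (0 : ℝ)..1, taylorKernel h s z t) ∧
      ∫ z : ℝ, ∫ t in (0 : ℝ)..1, taylorKernel h s z t =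
        (∫ t in (0 : ℝ)..1, (1 - t) * t ^ (-s - 1)) * ∫ u : ℝ, h u * |u| ^ s := by
  have hK := integrable_uncurry_taylorKernel hs hh hW
  simp_rw [intervalIntegral.integral_of_le zero_le_one]
  refine ⟨hK.integral_prod_left, ?_⟩
  rw [integral_integral_swap hK, ← integral_mul_const]
  exact setIntegral_congr_fun measurableSet_Ioc fun t ht => integral_taylorKernel ht.1

end TaylorKernel

theorem sub_sub_deriv_mul_div_abs_rpow_eq_integral {f : ℝ → ℝ} (hf : ContDiff ℝ 2 f)
    {lam : ℝ} (hlam : lam ≠ 1) (x z : ℝ) :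
    (f (x + z) - f x - deriv f x * z) / |z| ^ (1 + lam) =
      ∫ t in (0 : ℝ)..1, taylorKernel (fun u => deriv (deriv f) (x + u)) (1 - lam) z t := by
  rcases eq_or_ne z 0 with rfl | hz
  · -- both sides vanish, the right one because `|0| ^ (1 - lam) = 0` for `lam ≠ 1`
    simp [taylorKernel, zero_rpow (sub_ne_zero.2 hlam.symm)]
  rw [sub_sub_deriv_mul_eq_integral hf, ← intervalIntegral.integral_div]
  refine intervalIntegral.integral_congr fun t _ => ?_
  have hpow : z ^ 2 / |z| ^ (1 + lam) = |z| ^ (1 - lam) := by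
    rw [← sq_abs, ← rpow_two, ← rpow_sub (abs_pos.2 hz)]
    congr 1
    ring
  rw [taylorKernel, ← hpow]
  ring

/-- For `λ ∈ (1,2)` and a Schwartz function `φ`, the second-difference quotient
`z ↦ (φ(x+z) − φ(x) − φ'(x)z)/|z|^{1+λ}` is integrable on `ℝ` and
`∫ (φ(x+z) − φ(x) − φ'(x)z)/|z|^{1+λ} dz = (1/(λ(λ−1))) ∫ φ''(x+z)/|z|^{λ−1} dz`. -/
theorem integral_second_difference_eq
    (lam : ℝ) (hlam : lam ∈ Set.Ioo (1 : ℝ) 2)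
    (φ : SchwartzMap ℝ ℝ) (x : ℝ) :
    Integrable
      (fun z : ℝ => (φ (x + z) - φ x - deriv (⇑φ) x * z) / |z| ^ (1 + lam)) volume ∧
    ∫ z : ℝ, (φ (x + z) - φ x - deriv (⇑φ) x * z) / |z| ^ (1 + lam) =
      (1 / (lam * (lam - 1))) * ∫ z : ℝ, deriv (deriv (⇑φ)) (x + z) / |z| ^ (lam - 1) := by
  obtain ⟨hlam₁, hlam₂⟩ := hlam
  set ψ := SchwartzMap.derivCLM ℝ ℝ (SchwartzMap.derivCLM ℝ ℝ φ)
  have hψ : deriv (deriv (⇑φ)) = ψ := rfl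
  have hW : Integrable fun u : ℝ => ψ (x + u) * |u| ^ (1 - lam) :=
    integrable_mul_abs_rpow_of_abs_le (by linarith) (by linarith) (ψ.integrable.comp_add_left x)
      fun u => ψ.norm_le_seminorm ℝ (x + u)
  obtain ⟨h_int, h_eq⟩ := integrable_integral_taylorKernel_and_eq (h := fun u => ψ (x + u))
    (by linarith) (ψ.continuous.measurable.comp (measurable_const_add x)) hW
  simp_rw [sub_sub_deriv_mul_div_abs_rpow_eq_integral (φ.smooth 2) hlam₁.ne', hψ]
  refine ⟨h_int, ?_⟩
  rw [h_eq, show -(1 - lam) - 1 = lam - 2 by ring, integral_one_sub_mul_rpow (by linarith)]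
  congr 1
  · ring
  · congr 1 with u
    rw [div_eq_mul_inv, ← rpow_neg (abs_nonneg u), neg_sub]
end
end

section
/- The function r : (0,2) → ℝ defined by r(λ) = (2/λ)^{1/(2−λ)} is strictly decreasing on (0,2); moreover r(λ) → +∞ as λ → 0⁺ and r(λ) → √e as λ → 2⁻. -/
open Real Filter

/-!
Writing `r(λ) = exp (s λ)` with `s λ = (log λ - log 2) / (λ - 2)` the slope of the secant of
`log` through `λ` and `2`, strict concavity of `log` makes `s` strictly decreasing. As `λ → 0⁺`
the secant slope blows up because `log λ → -∞`, and as `λ → 2⁻` it tends to `log' 2 = 1/2`,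
so `r(λ) → exp (1/2) = √e`.
-/

theorem StrictConcaveOn.strictAntiOn_slope {s : Set ℝ} {f : ℝ → ℝ} (hf : StrictConcaveOn ℝ s f)
    {a : ℝ} (ha : a ∈ s) : StrictAntiOn (slope f a) (s \ {a}) := by
  intro x hx y hy hxy
  simpa only [slope_def_field] using hf.secant_strict_mono ha hx.1 hy.1 hx.2 hy.2 hxy

theorem div_rpow_one_div_sub_eq_exp_slope_log {a x : ℝ} (ha : 0 < a) (hx : 0 < x) :
    (a / x) ^ (1 / (a - x)) = exp (slope log a x) := by
  rw [rpow_def_of_pos (div_pos ha hx), log_div ha.ne' hx.ne', slope_comm, slope_def_field,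
    mul_one_div]

theorem tendsto_slope_log_nhdsGT_zero {a : ℝ} (ha : 0 < a) :
    Tendsto (slope log a) (nhdsWithin 0 (Set.Ioi 0)) atTop := by
  have hlog : Tendsto (fun x => log a - log x) (nhdsWithin 0 (Set.Ioi 0)) atTop :=
    tendsto_atTop_add_const_left _ _ (tendsto_neg_atBot_atTop.comp tendsto_log_nhdsGT_zero)
  have hinv : Tendsto (fun x : ℝ => (a - x)⁻¹) (nhdsWithin 0 (Set.Ioi 0)) (nhds a⁻¹) := by
    refine Tendsto.mono_left ?_ nhdsWithin_le_nhds
    simpa using ((continuous_const.sub continuous_id).tendsto (0 : ℝ)).inv₀ (by simpa using ha.ne')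
  refine (hlog.atTop_mul_pos (inv_pos.2 ha) hinv).congr fun x => ?_
  rw [slope_comm, slope_def_field, div_eq_mul_inv]

theorem tendsto_slope_log_nhdsNE {a : ℝ} (ha : a ≠ 0) :
    Tendsto (slope log a) (nhdsWithin a {a}ᶜ) (nhds a⁻¹) :=
  hasDerivAt_iff_tendsto_slope.1 (hasDerivAt_log ha)

/-- The ratio `r(λ) = (2/λ)^{1/(2−λ)}` of the neutral to the maximizing frequency
is strictly decreasing on `(0,2)`, tends to `+∞` as `λ → 0⁺` and tends to `√e`
as `λ → 2⁻`. -/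
theorem ratio_strictAnti_and_limits :
    StrictAntiOn (fun lam : ℝ => (2 / lam) ^ (1 / (2 - lam))) (Set.Ioo (0 : ℝ) 2) ∧
    Tendsto (fun lam : ℝ => (2 / lam) ^ (1 / (2 - lam)))
      (nhdsWithin 0 (Set.Ioi 0)) atTop ∧
    Tendsto (fun lam : ℝ => (2 / lam) ^ (1 / (2 - lam)))
      (nhdsWithin 2 (Set.Iio 2)) (nhds (Real.sqrt (Real.exp 1))) := by
  have hr : Set.EqOn (fun lam : ℝ => (2 / lam) ^ (1 / (2 - lam))) (exp ∘ slope log 2)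
      (Set.Ioi 0) := fun x hx => div_rpow_one_div_sub_eq_exp_slope_log two_pos hx
  refine ⟨fun x hx y hy hxy => ?_, ?_, ?_⟩
  · rw [hr hx.1, hr hy.1]
    exact exp_lt_exp.2 <| strictConcaveOn_log_Ioi.strictAntiOn_slope (Set.mem_Ioi.2 two_pos)
      ⟨hx.1, hx.2.ne⟩ ⟨hy.1, hy.2.ne⟩ hxy
  · exact (tendsto_exp_atTop.comp (tendsto_slope_log_nhdsGT_zero two_pos)).congr'
      hr.eventuallyEq_nhdsWithin.symm
  · rw [sqrt_eq_rpow, ← exp_mul, one_mul, one_div]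
    have hpos : Set.Ioi (0 : ℝ) ∈ nhdsWithin 2 (Set.Iio 2) :=
      mem_nhdsWithin_of_mem_nhds (Ioi_mem_nhds two_pos)
    have hslope := (tendsto_slope_log_nhdsNE two_ne_zero).mono_left
      (nhdsWithin_mono 2 fun x (hx : x < 2) => hx.ne)
    exact ((continuous_exp.tendsto _).comp hslope).congr'
      (hr.eventuallyEq_of_mem hpos).symm
end
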